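/- There exists an injective group homomorphism from the alternating group A₅ into SO(3) (the group of 3×3 real rotation matrices). -/

import Mathlib

/-!
The rotations of the dodecahedron permute its five inscribed cubes, and this is how they form
`A₅`; we run that identification backwards. Labelling the twenty vertices by ordered pairs of
distinct cubes makes `A₅` act on them. The even permutations whose action on the vertices is
induced by a rotation form a subgroup; it contains `(0 1)(3 4)` and `(1 2 3)`, realized by
explicit rotations, hence elements of order 2, 3 and 5, so it has index at most 2 and is all of
`A₅` by simplicity. The vertices span `ℝ³`, so the inducing rotation is unique and
multiplicative in the permutation; the resulting homomorphism is nontrivial, hence injective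
as `A₅` is simple.
-/

/-- The determinant, as a monoid homomorphism from the 3×3 real orthogonal group. -/
def orthogonalDet : Matrix.orthogonalGroup (Fin 3) ℝ →* ℝ where
  toFun A := (A : Matrix (Fin 3) (Fin 3) ℝ).det
  map_one' := by simp
  map_mul' := by simp

/-- `SO(3)`: the group of 3×3 real orthogonal matrices of determinant 1, as the
kernel of the determinant homomorphism on the orthogonal group. -/
def SO3 : Subgroup (Matrix.orthogonalGroup (Fin 3) ℝ) := orthogonalDet.ker

open Matrix Equiv.Perm

namespace MulAction

variable {G X K V : Type*} [Group G] [MulAction G X] [Group K] [MulAction K V]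

variable (K) in
def realizableSubgroup (v : X → V) : Subgroup G where
  carrier := {g | ∃ k : K, ∀ x, k • v x = v (g • x)}
  one_mem' := ⟨1, fun x => by rw [one_smul, one_smul]⟩
  mul_mem' := by
    rintro g h ⟨k, hk⟩ ⟨l, hl⟩
    exact ⟨k * l, fun x => by rw [mul_smul, hl, hk, mul_smul]⟩
  inv_mem' := by
    rintro g ⟨k, hk⟩
    exact ⟨k⁻¹, fun x => by rw [inv_smul_eq_iff, hk, smul_inv_smul]⟩

theorem exists_monoidHom_smul_eq {v : X → V}
    (hv : ∀ k k' : K, (∀ x, k • v x = k' • v x) → k = k')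
    (h : realizableSubgroup K v = (⊤ : Subgroup G)) :
    ∃ ρ : G →* K, ∀ g x, ρ g • v x = v (g • x) := by
  choose ρ hρ using fun g : G => (h ▸ Subgroup.mem_top g : g ∈ realizableSubgroup K v)
  refine ⟨MonoidHom.mk' ρ fun g g' => hv _ _ fun x => ?_, hρ⟩
  rw [hρ, mul_smul, mul_smul, hρ, hρ]

end MulAction

theorem MonoidHom.injective_of_isSimpleGroup {G H : Type*} [Group G] [IsSimpleGroup G]
    [Group H] (f : G →* H) {g : G} (hg : f g ≠ 1) : Function.Injective f := by
  rcases f.normal_ker.eq_bot_or_eq_top with hker | hker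
  · exact f.ker_eq_bot_iff.mp hker
  · exact absurd (f.mem_ker.mp (hker ▸ Subgroup.mem_top g)) hg

theorem Subgroup.eq_top_of_card_dvd_two_mul {G : Type*} [Group G] [IsSimpleGroup G] [Finite G]
    {H : Subgroup G} (hH : H ≠ ⊥) (h : Nat.card G ∣ 2 * Nat.card H) : H = ⊤ := by
  have hindex : H.index ∣ 2 := by
    rw [← H.card_mul_index, mul_comm] at h
    exact Nat.dvd_of_mul_dvd_mul_right Nat.card_pos h
  rcases (Nat.dvd_prime Nat.prime_two).mp hindex with h1 | h2
  · exact index_eq_one.mp h1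
  · exact (normal_of_index_eq_two h2).eq_bot_or_eq_top.resolve_left hH

theorem alternatingGroup.eq_top_of_mem_orderOf_two_three_five
    {H : Subgroup (alternatingGroup (Fin 5))}
    {a b c : alternatingGroup (Fin 5)} (ha : a ∈ H) (hb : b ∈ H) (hc : c ∈ H)
    (ha2 : orderOf a = 2) (hb3 : orderOf b = 3) (hc5 : orderOf c = 5) : H = ⊤ := by
  have hH : H ≠ ⊥ := fun hbot => by
    rw [hbot, Subgroup.mem_bot] at ha
    simp [ha] at ha2
  refine Subgroup.eq_top_of_card_dvd_two_mul hH ?_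
  have h30 : 30 ∣ Nat.card H := by
    have h2 := ha2 ▸ H.orderOf_dvd_natCard ha
    have h3 := hb3 ▸ H.orderOf_dvd_natCard hb
    have h5 := hc5 ▸ H.orderOf_dvd_natCard hc
    omega
  rw [nat_card_alternatingGroup, Nat.card_fin]
  exact Nat.mul_dvd_mul_left 2 h30

theorem Matrix.ext_on_range {m n ι R : Type*} [Fintype n] [CommSemiring R]
    {A B : Matrix m n R} {v : ι → n → R} (hv : Submodule.span R (Set.range v) = ⊤)
    (h : ∀ i, A *ᵥ v i = B *ᵥ v i) : A = B :=
  ext_iff_mulVec.mpr fun w => LinearMap.congr_fun (LinearMap.ext_on_range (f := A.mulVecLin)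
    (g := B.mulVecLin) hv h) w

instance : SMul SO3 (Fin 3 → ℝ) where
  smul k w := ((k : orthogonalGroup (Fin 3) ℝ) : Matrix (Fin 3) (Fin 3) ℝ) *ᵥ w

instance : MulAction SO3 (Fin 3 → ℝ) where
  one_smul := one_mulVec
  mul_smul _ _ w := (mulVec_mulVec w _ _).symm

namespace SO3

def ofMatrix (A : Matrix (Fin 3) (Fin 3) ℝ) (hA : A * Aᵀ = 1) (hdet : A.det = 1) : SO3 :=
  ⟨⟨A, (mem_orthogonalGroup_iff (Fin 3) ℝ).mpr hA⟩, hdet⟩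

theorem ext_on_range {ι : Type*} {v : ι → Fin 3 → ℝ}
    (hv : Submodule.span ℝ (Set.range v) = ⊤) {k k' : SO3} (h : ∀ i, k • v i = k' • v i) :
    k = k' :=
  Subtype.ext <| Subtype.ext <| Matrix.ext_on_range hv h

end SO3

section Icosahedral

open Real
open scoped goldenRatio

theorem inv_goldenRatio_eq_sub_one : φ⁻¹ = φ - 1 := by
  rw [inv_goldenRatio, ← one_sub_goldenConj]
  ring

/-- Vertex `p` of the dodecahedron gets the label `(i, j)` when `p` lies on the inscribed cubes
`i` and `j` and the third-turn about `p` permutes the other three cubes as `(k l m)`, with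
`[i, j, k, l, m]` an even arrangement of `Fin 5`; cube `0` is `{±1}³`. Swapping `i` and `j`
gives the antipode, and the diagonal is sent to `0`. -/
noncomputable def dodecahedronVertex : Fin 5 × Fin 5 → Fin 3 → ℝ
  | (i, j) => ![![![0, 0, 0], ![1, -1, 1], ![1, 1, -1], ![-1, 1, 1], ![-1, -1, -1]],
    ![![-1, 1, -1], ![0, 0, 0], ![0, φ⁻¹, φ], ![-φ⁻¹, -φ, 0], ![φ, 0, -φ⁻¹]],
    ![![-1, -1, 1], ![0, -φ⁻¹, -φ], ![0, 0, 0], ![φ, 0, φ⁻¹], ![-φ⁻¹, φ, 0]],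
    ![![1, -1, -1], ![φ⁻¹, φ, 0], ![-φ, 0, -φ⁻¹], ![0, 0, 0], ![0, -φ⁻¹, φ]],
    ![![1, 1, 1], ![-φ, 0, φ⁻¹], ![φ⁻¹, -φ, 0], ![0, φ⁻¹, -φ], ![0, 0, 0]]] i j

theorem span_range_dodecahedronVertex :
    Submodule.span ℝ (Set.range dodecahedronVertex) = ⊤ := by
  have hv x : dodecahedronVertex x ∈ Submodule.span ℝ (Set.range dodecahedronVertex) :=
    Submodule.subset_span ⟨x, rfl⟩
  rw [eq_top_iff, ← (Pi.basisFun ℝ (Fin 3)).span_eq, Submodule.span_le]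
  rintro _ ⟨k, rfl⟩
  rw [SetLike.mem_coe]
  fin_cases k
  · convert Submodule.smul_mem _ (1 / 2 : ℝ) (add_mem (hv (0, 1)) (hv (0, 2))) using 2
    ext i; fin_cases i <;> simp [dodecahedronVertex, one_add_one_eq_two]
  · convert Submodule.smul_mem _ (1 / 2 : ℝ) (add_mem (hv (0, 2)) (hv (0, 3))) using 2
    ext i; fin_cases i <;> simp [dodecahedronVertex, one_add_one_eq_two]
  · convert Submodule.smul_mem _ (1 / 2 : ℝ) (add_mem (hv (0, 1)) (hv (0, 3))) using 2
    ext i; fin_cases i <;> simp [dodecahedronVertex, one_add_one_eq_two]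

/-- `2 u uᵀ - 1` for the unit vector `u = (1, φ, φ⁻¹) / 2`. -/
noncomputable def halfTurnMatrix : Matrix (Fin 3) (Fin 3) ℝ :=
  !![-1 / 2, φ / 2, φ⁻¹ / 2; φ / 2, φ⁻¹ / 2, 1 / 2; φ⁻¹ / 2, 1 / 2, -φ / 2]

theorem halfTurnMatrix_mul_transpose : halfTurnMatrix * halfTurnMatrixᵀ = 1 := by
  simp only [halfTurnMatrix, inv_goldenRatio_eq_sub_one]
  ext i j
  fin_cases i <;> fin_cases j <;> simp [Matrix.mul_apply, Fin.sum_univ_three] <;>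
    linarith [goldenRatio_sq]

theorem det_halfTurnMatrix : halfTurnMatrix.det = 1 := by
  have hcube : φ ^ 3 = 2 * φ + 1 := by linear_combination (φ + 1) * goldenRatio_sq
  simp only [halfTurnMatrix, inv_goldenRatio_eq_sub_one, det_fin_three, of_apply, cons_val',
    cons_val_zero, cons_val_one, cons_val, cons_val_fin_one]
  linarith [goldenRatio_sq, hcube]

def thirdTurnMatrix : Matrix (Fin 3) (Fin 3) ℝ := !![0, 0, 1; 1, 0, 0; 0, 1, 0]

theorem thirdTurnMatrix_mul_transpose : thirdTurnMatrix * thirdTurnMatrixᵀ = 1 := by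
  ext i j
  fin_cases i <;> fin_cases j <;> simp [thirdTurnMatrix, Matrix.mul_apply, Fin.sum_univ_three]

theorem det_thirdTurnMatrix : thirdTurnMatrix.det = 1 := by
  simp [thirdTurnMatrix, det_fin_three]

def halfTurnPerm : alternatingGroup (Fin 5) :=
  ⟨Equiv.swap 0 1 * Equiv.swap 3 4, mem_alternatingGroup.mpr (by decide)⟩

def thirdTurnPerm : alternatingGroup (Fin 5) :=
  ⟨Equiv.swap 1 3 * Equiv.swap 1 2, mem_alternatingGroup.mpr (by decide)⟩

theorem orderOf_halfTurnPerm : orderOf halfTurnPerm = 2 :=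
  orderOf_eq_prime (by decide) (by decide)

theorem orderOf_thirdTurnPerm : orderOf thirdTurnPerm = 3 :=
  orderOf_eq_prime (by decide) (by decide)

theorem orderOf_halfTurnPerm_mul_thirdTurnPerm : orderOf (halfTurnPerm * thirdTurnPerm) = 5 :=
  have : Fact (Nat.Prime 5) := ⟨Nat.prime_five⟩
  orderOf_eq_prime (by decide) (by decide)

theorem halfTurnMatrix_mulVec_dodecahedronVertex (x : Fin 5 × Fin 5) :
    halfTurnMatrix *ᵥ dodecahedronVertex x = dodecahedronVertex (halfTurnPerm • x) := by
  obtain ⟨i, j⟩ := x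
  simp only [halfTurnMatrix, dodecahedronVertex, inv_goldenRatio_eq_sub_one]
  ext k
  fin_cases i <;> fin_cases j <;> fin_cases k <;>
    simp [halfTurnPerm, mulVec, dotProduct, Fin.sum_univ_three, Subgroup.smul_def,
      Equiv.swap_apply_of_ne_of_ne] <;>
    linarith [goldenRatio_sq]

theorem thirdTurnMatrix_mulVec_dodecahedronVertex (x : Fin 5 × Fin 5) :
    thirdTurnMatrix *ᵥ dodecahedronVertex x = dodecahedronVertex (thirdTurnPerm • x) := by
  obtain ⟨i, j⟩ := x
  ext k
  fin_cases i <;> fin_cases j <;> fin_cases k <;>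
    simp [thirdTurnMatrix, dodecahedronVertex, thirdTurnPerm, mulVec, dotProduct,
      Fin.sum_univ_three, Subgroup.smul_def, Equiv.swap_apply_of_ne_of_ne]

end Icosahedral

theorem a5_embeds_in_so3 :
    ∃ φ : alternatingGroup (Fin 5) →* SO3, Function.Injective φ := by
  have hhalf : halfTurnPerm ∈ MulAction.realizableSubgroup SO3 dodecahedronVertex :=
    ⟨SO3.ofMatrix _ halfTurnMatrix_mul_transpose det_halfTurnMatrix,
      halfTurnMatrix_mulVec_dodecahedronVertex⟩
  have hthird : thirdTurnPerm ∈ MulAction.realizableSubgroup SO3 dodecahedronVertex :=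
    ⟨SO3.ofMatrix _ thirdTurnMatrix_mul_transpose det_thirdTurnMatrix,
      thirdTurnMatrix_mulVec_dodecahedronVertex⟩
  obtain ⟨ρ, hρ⟩ := MulAction.exists_monoidHom_smul_eq
    (fun _ _ => SO3.ext_on_range span_range_dodecahedronVertex)
    (alternatingGroup.eq_top_of_mem_orderOf_two_three_five hhalf hthird (mul_mem hhalf hthird)
      orderOf_halfTurnPerm orderOf_thirdTurnPerm orderOf_halfTurnPerm_mul_thirdTurnPerm)
  refine ⟨ρ, ρ.injective_of_isSimpleGroup (g := thirdTurnPerm) fun h => ?_⟩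
  have h01 := congrFun (hρ thirdTurnPerm (0, 1)) 1
  rw [h, one_smul, show thirdTurnPerm • ((0, 1) : Fin 5 × Fin 5) = (0, 2) by decide] at h01
  simp [dodecahedronVertex] at h01
  norm_num at h01
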